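/- Suppose messages are noiseless, i.e., for every player j and state ω', P_j(C | ω') > μ(C) implies P_j(C | ω') = 1, and suppose p* > μ(C), where p* = (c − b)/(a − b). Let S_A = {ω' ∈ Ω : there exists a p*-evident C-indicating event F with P_{1−i}(F | ω') ≥ p*} (the set of states where player 1−i, following the rational p-belief strategy, plays A). If at state ω player i p*-believes some p*-evident C-indicating event (there exists a p*-evident C-indicating event F with P_i(F | ω) ≥ p*), then player i's expected payoff from playing A at ω, namely a·P_i(S_A ∩ C | ω) + d·P_i(S_A \ C | ω) + b·P_i(Ω \ S_A | ω), is at least c. -/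

import Mathlib

/-
Let `F` be the `p*`-evident `C`-indicating event that player `i` `p*`-believes at `ω`. Since
`p* > μ(C) ≥ 0`, the cell `Π_i(ω)` meets `F`, and at a state of `F` player `i` assigns `C` a
probability `≥ p* > μ(C)`; the message is noiseless, so player `i` is in fact certain of `C`,
i.e. `Π_i(ω) ⊆ C`. The event `F` is `p*`-evident for player `1 - i` as well, hence `F ⊆ S_A`, and
player `i` believes `S_A` with probability `s ≥ p*`. The expected payoff of `A` is then
`a s + b (1 - s) ≥ b + p* (a - b) = c`.
-/

open Finset

variable {Ω : Type*}

/-- The conditional probability `P_i(E | ω) = μ(E ∩ Π_i(ω)) / μ(Π_i(ω))`,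
where `part i ω` is the cell of player `i`'s information partition containing `ω`. -/
noncomputable def condP [Fintype Ω] [DecidableEq Ω] (μ : Ω → ℝ)
    (part : Fin 2 → Ω → Finset Ω) (i : Fin 2) (E : Finset Ω) (ω : Ω) : ℝ :=
  (∑ x ∈ E ∩ part i ω, μ x) / (∑ x ∈ part i ω, μ x)

/-- `E` is `p`-evident: every player `p`-believes `E` at every state of `E`. -/
def pEvident [Fintype Ω] [DecidableEq Ω] (μ : Ω → ℝ)
    (part : Fin 2 → Ω → Finset Ω) (p : ℝ) (E : Finset Ω) : Prop :=
  ∀ i : Fin 2, ∀ ω ∈ E, p ≤ condP μ part i E ω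

/-- `E` is a `p`-evident `C`-indicating event. -/
def pEvidentInd [Fintype Ω] [DecidableEq Ω] (μ : Ω → ℝ)
    (part : Fin 2 → Ω → Finset Ω) (p : ℝ) (C E : Finset Ω) : Prop :=
  pEvident μ part p E ∧ ∀ i : Fin 2, ∀ ω ∈ E, p ≤ condP μ part i C ω

/-- `E` is the largest `p`-evident `C`-indicating event. -/
def isLargestInd [Fintype Ω] [DecidableEq Ω] (μ : Ω → ℝ)
    (part : Fin 2 → Ω → Finset Ω) (p : ℝ) (C E : Finset Ω) : Prop :=
  pEvidentInd μ part p C E ∧ ∀ F : Finset Ω, pEvidentInd μ part p C F → F ⊆ E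

/-- `p` is the `C`-evidence level of `E`: the maximum `q` for which `E` is a
`q`-evident `C`-indicating event. -/
def isEvidenceLevel [Fintype Ω] [DecidableEq Ω] (μ : Ω → ℝ)
    (part : Fin 2 → Ω → Finset Ω) (C E : Finset Ω) (p : ℝ) : Prop :=
  IsGreatest {q : ℝ | pEvidentInd μ part q C E} p

/-- `G` is the maximally evident `C`-indicating superset of `F`. -/
def isMaxEvidentSup [Fintype Ω] [DecidableEq Ω] (μ : Ω → ℝ)
    (part : Fin 2 → Ω → Finset Ω) (C F G : Finset Ω) : Prop :=
  F ⊆ G ∧ ∃ p : ℝ, isEvidenceLevel μ part C G p ∧ isLargestInd μ part p C G ∧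
    ∀ H : Finset Ω, F ⊆ H → ∀ q : ℝ, isEvidenceLevel μ part C H q → q ≤ p

/-- `E` is a maximally evident `C`-indicating event: it is the maximally evident
`C`-indicating superset of some nonempty event. -/
def isMaxEvident [Fintype Ω] [DecidableEq Ω] (μ : Ω → ℝ)
    (part : Fin 2 → Ω → Finset Ω) (C E : Finset Ω) : Prop :=
  ∃ F : Finset Ω, F.Nonempty ∧ isMaxEvidentSup μ part C F E

/-- `E` is a super-`p`-evident `C`-indicating event. -/
def superEvidentInd [Fintype Ω] [DecidableEq Ω] (μ : Ω → ℝ)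
    (part : Fin 2 → Ω → Finset Ω) (p : ℝ) (C E : Finset Ω) : Prop :=
  ∀ i : Fin 2, ∀ ω ∈ E, p < condP μ part i E ω ∧ p < condP μ part i C ω

/-- `E` is the largest super-evident `C`-indicating subset of `F`. -/
def isLargestSuperSub [Fintype Ω] [DecidableEq Ω] (μ : Ω → ℝ)
    (part : Fin 2 → Ω → Finset Ω) (C F E : Finset Ω) : Prop :=
  E ⊆ F ∧ ∃ p : ℝ, isEvidenceLevel μ part C F p ∧ superEvidentInd μ part p C E ∧
    ∀ G : Finset Ω, G ⊆ F → superEvidentInd μ part p C G → G ⊆ E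

section CondP

variable [Fintype Ω] [DecidableEq Ω] {μ : Ω → ℝ} {part : Fin 2 → Ω → Finset Ω} {i : Fin 2}
  {C E F : Finset Ω} {ω ω' : Ω}

theorem condP_eq_of_part_eq (h : part i ω' = part i ω) :
    condP μ part i E ω' = condP μ part i E ω := by
  simp only [condP, h]

theorem condP_mono (hμ : ∀ x, 0 ≤ μ x) (hEF : E ⊆ F) :
    condP μ part i E ω ≤ condP μ part i F ω :=
  div_le_div_of_nonneg_right
    (sum_le_sum_of_subset_of_nonneg (inter_subset_inter_right hEF) fun x _ _ => hμ x)
    (sum_nonneg fun x _ => hμ x)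

theorem exists_mem_part_of_condP_pos (h : 0 < condP μ part i E ω) :
    ∃ ω' ∈ E, ω' ∈ part i ω := by
  by_contra! hdisj
  have hempty : E ∩ part i ω = ∅ := by
    ext x
    simpa using hdisj x
  simp [condP, hempty] at h

theorem sum_part_ne_zero_of_condP_ne_zero (h : condP μ part i E ω ≠ 0) :
    ∑ x ∈ part i ω, μ x ≠ 0 := by
  intro h0
  simp [condP, h0] at h

theorem part_subset_of_condP_eq_one (hμ : ∀ x, 0 < μ x) (h : condP μ part i C ω = 1) :
    part i ω ⊆ C := by
  have hsum : ∑ x ∈ C ∩ part i ω, μ x = ∑ x ∈ part i ω, μ x :=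
    (div_eq_one_iff_eq (sum_part_ne_zero_of_condP_ne_zero (h ▸ one_ne_zero))).mp h
  have hdiff : ∑ x ∈ part i ω \ C, μ x = 0 := by
    rw [← sdiff_inter_self_right, sum_sdiff_eq_sub inter_subset_right, hsum, sub_self]
  intro x hx
  by_contra hxC
  exact (hμ x).ne' <|
    (sum_eq_zero_iff_of_nonneg fun y _ => (hμ y).le).mp hdiff x (mem_sdiff.mpr ⟨hx, hxC⟩)

theorem condP_inter_of_part_subset (hC : part i ω ⊆ C) :
    condP μ part i (E ∩ C) ω = condP μ part i E ω := by
  rw [condP, condP, inter_assoc, inter_eq_right.mpr hC]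

theorem condP_sdiff_of_part_subset (hC : part i ω ⊆ C) :
    condP μ part i (E \ C) ω = 0 := by
  have hempty : E \ C ∩ part i ω = ∅ := by
    ext x
    simp only [mem_inter, mem_sdiff, notMem_empty, iff_false]
    exact fun ⟨⟨_, hxC⟩, hx⟩ => hxC (hC hx)
  simp [condP, hempty]

theorem condP_univ_sdiff (h : ∑ x ∈ part i ω, μ x ≠ 0) :
    condP μ part i (univ \ E) ω = 1 - condP μ part i E ω := by
  have hsplit : univ \ E ∩ part i ω = part i ω \ (E ∩ part i ω) := by
    ext x
    simp only [mem_inter, mem_sdiff, mem_univ, true_and]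
    tauto
  rw [condP, condP, hsplit, sum_sdiff_eq_sub inter_subset_right, sub_div, div_self h]

theorem part_subset_of_noiseless (hμ : ∀ x, 0 < μ x)
    (hcell : ∀ ω ω', ω' ∈ part i ω → part i ω' = part i ω)
    (hnoiseless : ∀ ω', ∑ x ∈ C, μ x < condP μ part i C ω' → condP μ part i C ω' = 1)
    {p : ℝ} (hprior : ∑ x ∈ C, μ x < p) (hFC : ∀ ω' ∈ F, p ≤ condP μ part i C ω')
    (hF : 0 < condP μ part i F ω) :
    part i ω ⊆ C := by
  obtain ⟨ω', hω'F, hω'⟩ := exists_mem_part_of_condP_pos hF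
  refine part_subset_of_condP_eq_one hμ ?_
  rw [← condP_eq_of_part_eq (hcell ω ω' hω')]
  exact hnoiseless ω' (hprior.trans_le (hFC ω' hω'F))

end CondP

theorem le_expected_payoff_of_threshold_le {a b c s : ℝ} (hba : b < a)
    (hs : (c - b) / (a - b) ≤ s) : c ≤ a * s + b * (1 - s) := by
  have := (div_le_iff₀ (sub_pos.mpr hba)).mp hs
  linarith

theorem rational_pBelief_play_A_general [Fintype Ω] [DecidableEq Ω]
    (μ : Ω → ℝ) (part : Fin 2 → Ω → Finset Ω)
    (hμpos : ∀ ω : Ω, 0 < μ ω)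
    (hcell : ∀ (i : Fin 2) (ω ω' : Ω), ω' ∈ part i ω → part i ω' = part i ω)
    (a b c d : ℝ) (hac : c < a) (hbc : b < c)
    (C : Finset Ω) (i : Fin 2) (ω : Ω)
    (pstar : ℝ) (hpstar : pstar = (c - b) / (a - b))
    (hnoiseless : ∀ (j : Fin 2) (ω' : Ω),
      (∑ x ∈ C, μ x) < condP μ part j C ω' → condP μ part j C ω' = 1)
    (hprior : (∑ x ∈ C, μ x) < pstar)
    (SA : Finset Ω)
    (hSA : ∀ ω' : Ω, ω' ∈ SA ↔
      ∃ F : Finset Ω, pEvidentInd μ part pstar C F ∧ pstar ≤ condP μ part (1 - i) F ω')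
    (hbelief : ∃ F : Finset Ω, pEvidentInd μ part pstar C F ∧ pstar ≤ condP μ part i F ω) :
    c ≤ a * condP μ part i (SA ∩ C) ω + d * condP μ part i (SA \ C) ω +
      b * condP μ part i (Finset.univ \ SA) ω := by
  obtain ⟨F, hF, hFω⟩ := hbelief
  have hpstar_pos : 0 < pstar := (sum_nonneg fun x _ => (hμpos x).le).trans_lt hprior
  have hknowC : part i ω ⊆ C := part_subset_of_noiseless hμpos (hcell i) (hnoiseless i)
    hprior (hF.2 i) (hpstar_pos.trans_le hFω)
  have hFSA : F ⊆ SA := fun y hy => (hSA y).mpr ⟨F, hF, hF.1 (1 - i) y hy⟩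
  have hbeliefSA : pstar ≤ condP μ part i SA ω :=
    hFω.trans (condP_mono (fun x => (hμpos x).le) hFSA)
  have hcell_ne : ∑ x ∈ part i ω, μ x ≠ 0 :=
    sum_part_ne_zero_of_condP_ne_zero (hpstar_pos.trans_le hbeliefSA).ne'
  rw [condP_inter_of_part_subset hknowC, condP_sdiff_of_part_subset hknowC,
    condP_univ_sdiff hcell_ne, mul_zero, add_zero]
  exact le_expected_payoff_of_threshold_le (hbc.trans hac) (hpstar ▸ hbeliefSA)

/-- Rational p-belief strategy, first case: if player `i` `p*`-believes some `p*`-evident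
`C`-indicating event, then the expected payoff of playing `A` is at least `c`. -/
theorem rational_pBelief_play_A [Fintype Ω] [DecidableEq Ω] [Nonempty Ω]
    (μ : Ω → ℝ) (part : Fin 2 → Ω → Finset Ω)
    (hμpos : ∀ ω : Ω, 0 < μ ω) (hμsum : ∑ ω : Ω, μ ω = 1)
    (hmem : ∀ (i : Fin 2) (ω : Ω), ω ∈ part i ω)
    (hcell : ∀ (i : Fin 2) (ω ω' : Ω), ω' ∈ part i ω → part i ω' = part i ω)
    (a b c d : ℝ) (hac : c < a) (hbc : b < c) (hdc : d < c)
    (C : Finset Ω) (i : Fin 2) (ω : Ω)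
    (pstar : ℝ) (hpstar : pstar = (c - b) / (a - b))
    (hnoiseless : ∀ (j : Fin 2) (ω' : Ω),
      (∑ x ∈ C, μ x) < condP μ part j C ω' → condP μ part j C ω' = 1)
    (hprior : (∑ x ∈ C, μ x) < pstar)
    (SA : Finset Ω)
    (hSA : ∀ ω' : Ω, ω' ∈ SA ↔
      ∃ F : Finset Ω, pEvidentInd μ part pstar C F ∧ pstar ≤ condP μ part (1 - i) F ω')
    (hbelief : ∃ F : Finset Ω, pEvidentInd μ part pstar C F ∧ pstar ≤ condP μ part i F ω) :
    c ≤ a * condP μ part i (SA ∩ C) ω + d * condP μ part i (SA \ C) ω +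
      b * condP μ part i (Finset.univ \ SA) ω :=
  rational_pBelief_play_A_general μ part hμpos hcell a b c d hac hbc C i ω pstar hpstar hnoiseless
    hprior SA hSA hbelief
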